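/- arXiv:math/0410536 — 7 statements merged into one kernel-verified Lean document; each statement's English description precedes it below -/
import Mathlib

section
/- Let p be a prime, let F = Q(ξ_p)(X) be the rational function field in one variable X over the p-th cyclotomic field Q(ξ_p), and let K = F(X^{1/p}) be obtained by adjoining a p-th root of X. Then K/F is a cyclic Galois extension of degree p and ξ_p ∉ N_{K/F}(K×); that is, m(K/F) = 0. -/
/-!
Kummer theory makes `K/F` cyclic of degree `p` as soon as `X` is not a `p`-th power in `F`,
which is seen on degrees. For the norm, write `L = ℚ(ζ_p)`: then `u` is transcendental over `L`
and `K = L(u)`, so every element of `K` is `A(u)/B(u)` with `A, B ∈ L[X]`. The conjugates of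
`A(u)` are the `A(ζ^m u)`, so if `N(A(u)/B(u)) = a ∈ L` then `a · ∏ₘ B(ζ^m X) = ∏ₘ A(ζ^m X)`
in `L[X]`. Comparing lowest-order terms shows that `a` is a `p`-th power in `L`, whereas a
primitive `p`-th root of unity is not: a `p`-th root of it would generate `ℚ(ζ_{p²})`, of degree
`p(p-1) > p-1`.
-/

open Polynomial IntermediateField

namespace Polynomial

variable {R : Type*} [CommRing R] [IsDomain R]

theorem support_comp_C_mul_X {a : R} (ha : a ≠ 0) (Q : R[X]) :
    (Q.comp (C a * X)).support = Q.support := by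
  ext n
  simp [pow_ne_zero n ha]

theorem natTrailingDegree_comp_C_mul_X {a : R} (ha : a ≠ 0) (Q : R[X]) :
    (Q.comp (C a * X)).natTrailingDegree = Q.natTrailingDegree := by
  simp only [natTrailingDegree, trailingDegree, support_comp_C_mul_X ha]

theorem trailingCoeff_comp_C_mul_X {a : R} (ha : a ≠ 0) (Q : R[X]) :
    (Q.comp (C a * X)).trailingCoeff = Q.trailingCoeff * a ^ Q.natTrailingDegree := by
  rw [trailingCoeff, natTrailingDegree_comp_C_mul_X ha, comp_C_mul_X_coeff, trailingCoeff]

theorem comp_C_mul_X_ne_zero {a : R} (ha : a ≠ 0) {Q : R[X]} (hQ : Q ≠ 0) :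
    Q.comp (C a * X) ≠ 0 :=
  (comp_C_mul_X_eq_zero_iff (mem_nonZeroDivisors_of_ne_zero ha)).not.mpr hQ

variable {ι : Type*} (s : Finset ι)

theorem trailingCoeff_prod (f : ι → R[X]) :
    (∏ i ∈ s, f i).trailingCoeff = ∏ i ∈ s, (f i).trailingCoeff := by
  classical
  induction s using Finset.induction_on with
  | empty => rw [Finset.prod_empty, Finset.prod_empty, trailingCoeff_eq_coeff_zero] <;> simp
  | insert i s hi ih => rw [Finset.prod_insert hi, Finset.prod_insert hi, trailingCoeff_mul, ih]

theorem natTrailingDegree_prod {f : ι → R[X]} (hf : ∀ i ∈ s, f i ≠ 0) :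
    (∏ i ∈ s, f i).natTrailingDegree = ∑ i ∈ s, (f i).natTrailingDegree := by
  classical
  induction s using Finset.induction_on with
  | empty => simp
  | insert i s hi ih =>
    rw [Finset.prod_insert hi, Finset.sum_insert hi, natTrailingDegree_mul (hf i (by simp))
      (Finset.prod_ne_zero_iff.mpr fun j hj ↦ hf j (by simp [hj])),
      ih fun j hj ↦ hf j (by simp [hj])]

theorem natTrailingDegree_prod_comp_C_mul_X {a : ι → R} (ha : ∀ i ∈ s, a i ≠ 0) {Q : R[X]}
    (hQ : Q ≠ 0) :
    (∏ i ∈ s, Q.comp (C (a i) * X)).natTrailingDegree = s.card * Q.natTrailingDegree := by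
  rw [natTrailingDegree_prod s fun i hi ↦ comp_C_mul_X_ne_zero (ha i hi) hQ,
    Finset.sum_congr rfl fun i hi ↦ natTrailingDegree_comp_C_mul_X (ha i hi) Q,
    Finset.sum_const, smul_eq_mul]

theorem trailingCoeff_prod_comp_C_mul_X {a : ι → R} (ha : ∀ i ∈ s, a i ≠ 0) (Q : R[X]) :
    (∏ i ∈ s, Q.comp (C (a i) * X)).trailingCoeff =
      Q.trailingCoeff ^ s.card * (∏ i ∈ s, a i) ^ Q.natTrailingDegree := by
  rw [trailingCoeff_prod, Finset.prod_congr rfl fun i hi ↦ trailingCoeff_comp_C_mul_X (ha i hi) Q,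
    Finset.prod_mul_distrib, Finset.prod_const, Finset.prod_pow]

theorem exists_pow_card_eq_of_C_mul_prod_comp_eq {F : Type*} [Field F] {s : Finset ι}
    (hs : s.Nonempty) {b : ι → F} (hb : ∀ i ∈ s, b i ≠ 0) {A B : F[X]} (hB : B ≠ 0) {a : F}
    (ha : a ≠ 0) (h : C a * ∏ i ∈ s, B.comp (C (b i) * X) = ∏ i ∈ s, A.comp (C (b i) * X)) :
    ∃ t, t ^ s.card = a := by
  have hΦB : ∏ i ∈ s, B.comp (C (b i) * X) ≠ 0 :=
    Finset.prod_ne_zero_iff.mpr fun i hi ↦ comp_C_mul_X_ne_zero (hb i hi) hB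
  have hA : A ≠ 0 := by
    rintro rfl
    obtain ⟨i, hi⟩ := hs
    exact mul_ne_zero (C_ne_zero.mpr ha) hΦB (h.trans (Finset.prod_eq_zero hi zero_comp))
  have hdeg := congrArg natTrailingDegree h
  rw [natTrailingDegree_mul (C_ne_zero.mpr ha) hΦB, natTrailingDegree_C, zero_add,
    natTrailingDegree_prod_comp_C_mul_X _ hb hB, natTrailingDegree_prod_comp_C_mul_X _ hb hA,
    Nat.mul_left_cancel_iff hs.card_pos] at hdeg
  have htc := congrArg trailingCoeff h
  rw [trailingCoeff_mul, trailingCoeff_prod_comp_C_mul_X _ hb, trailingCoeff_prod_comp_C_mul_X _ hb,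
    hdeg, trailingCoeff_eq_coeff_zero (by simpa using ha), coeff_C_zero, ← mul_assoc] at htc
  refine ⟨A.trailingCoeff / B.trailingCoeff, ?_⟩
  rw [div_pow, div_eq_iff (pow_ne_zero _ (trailingCoeff_nonzero_iff_nonzero.mpr hB))]
  exact (mul_right_cancel₀ (pow_ne_zero _ (Finset.prod_ne_zero_iff.mpr hb)) htc).symm

end Polynomial

theorem IsPrimitiveRoot.pow_ne_of_isCyclotomicExtension_rat {L : Type*} [Field L] [Algebra ℚ L]
    {p : ℕ} [hp : Fact p.Prime] [IsCyclotomicExtension {p} ℚ L] {ζ : L}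
    (hζ : IsPrimitiveRoot ζ p) (t : L) : t ^ p ≠ ζ := by
  rintro rfl
  have ht : IsPrimitiveRoot t (p ^ 2) := by
    refine orderOf_eq_prime_pow (p := p) (x := t) (n := 1) ?_ ?_ ▸ IsPrimitiveRoot.orderOf t
    · simpa using hζ.ne_one hp.out.one_lt
    · rw [pow_succ, pow_one, pow_mul, hζ.pow_eq_one]
  have := IsCyclotomicExtension.finiteDimensional {p} ℚ L
  have key := ht.lcm_totient_le_finrank ht
    (cyclotomic.irreducible_rat (by simpa using pow_pos hp.out.pos 2))
  rw [Nat.lcm_self, IsCyclotomicExtension.finrank L (cyclotomic.irreducible_rat hp.out.pos),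
    Nat.totient_prime_pow hp.out two_pos, Nat.totient_prime hp.out] at key
  have : p * (p - 1) ≤ 1 * (p - 1) := by simpa using key
  exact hp.out.one_lt.not_ge (Nat.le_of_mul_le_mul_right this (Nat.sub_pos_of_lt hp.out.one_lt))

namespace RatFunc

variable {L : Type*} [Field L]

theorem intDegree_pow {f : RatFunc L} (hf : f ≠ 0) (n : ℕ) :
    (f ^ n).intDegree = n * f.intDegree := by
  induction n with
  | zero => simp [intDegree_one]
  | succ n ih =>
    rw [pow_succ, intDegree_mul (pow_ne_zero _ hf) hf, ih]
    push_cast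
    ring

theorem irreducible_X_pow_sub_C_X {p : ℕ} (hp : p.Prime) :
    Irreducible (Polynomial.X ^ p - Polynomial.C (X : RatFunc L)) := by
  refine X_pow_sub_C_irreducible_of_prime hp fun (f : RatFunc L) hf ↦ ?_
  have hf0 : f ≠ 0 := by
    rintro rfl
    exact X_ne_zero (K := L) (by simpa [hp.ne_zero] using hf.symm)
  have hdeg := congrArg intDegree hf
  rw [intDegree_pow hf0, intDegree_X] at hdeg
  exact hp.ne_one (by exact_mod_cast Int.eq_one_of_mul_eq_one_right (by positivity) hdeg)

end RatFunc

theorem isSplittingField_X_pow_sub_C_of_adjoin_eq_top {F K : Type*} [Field F] [Field K]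
    [Algebra F K] {n : ℕ} (hn : n ≠ 0) {ζ : F} (hζ : IsPrimitiveRoot ζ n) {a : F} {u : K}
    (hu : u ^ n = algebraMap F K a) (hgen : adjoin F {u} = ⊤) :
    IsSplittingField F K (X ^ n - C a) where
  splits' := by
    rw [Polynomial.map_sub, Polynomial.map_pow, Polynomial.map_C, Polynomial.map_X]
    exact X_pow_sub_C_splits_of_isPrimitiveRoot (hζ.map_of_injective (algebraMap F K).injective) hu
  adjoin_rootSet' := by
    have hroot : aeval u (X ^ n - C a) = 0 := by simp [hu]
    have hint : IsIntegral F u := ⟨_, monic_X_pow_sub_C a hn, by simpa [aeval_def] using hroot⟩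
    rw [eq_top_iff, ← top_toSubalgebra, ← hgen,
      adjoin_simple_toSubalgebra_of_isAlgebraic hint.isAlgebraic]
    refine Algebra.adjoin_mono (Set.singleton_subset_iff.mpr ?_)
    rw [mem_rootSet_of_ne (X_pow_sub_C_ne_zero (Nat.pos_of_ne_zero hn) a)]
    exact hroot

section PthRootOfX

variable {L : Type*} [Field L] {p : ℕ} {K : Type*} [Field K] [Algebra (RatFunc L) K]
  [Algebra L K] [IsScalarTower L (RatFunc L) K] {u : K}

theorem transcendental_of_pow_eq_X (hu : u ^ p = algebraMap (RatFunc L) K RatFunc.X) :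
    Transcendental L u := fun halg ↦ by
  have := halg.pow p
  rw [hu, isAlgebraic_algebraMap_iff (algebraMap (RatFunc L) K).injective] at this
  exact RatFunc.transcendental_X this

theorem adjoin_simple_eq_top_of_pow_eq_X (hu : u ^ p = algebraMap (RatFunc L) K RatFunc.X)
    (hgen : adjoin (RatFunc L) {u} = ⊤) : adjoin L {u} = ⊤ := by
  have hF (f : RatFunc L) : algebraMap (RatFunc L) K f ∈ adjoin L {u} := by
    have hf : IsScalarTower.toAlgHom L (RatFunc L) K f ∈ (adjoin L {RatFunc.X}).map
        (IsScalarTower.toAlgHom L (RatFunc L) K) :=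
      (map_mem_map _ _).mpr (by simp [RatFunc.adjoin_X])
    rw [adjoin_map, Set.image_singleton, IsScalarTower.toAlgHom_apply, ← hu] at hf
    exact adjoin_simple_le_iff.mpr (pow_mem (mem_adjoin_simple_self L u) p) hf
  have hle : adjoin (RatFunc L) {u} ≤ (adjoin L {u}).toSubfield.toIntermediateField hF :=
    adjoin_simple_le_iff.mpr (mem_adjoin_simple_self L u)
  rw [hgen, top_le_iff] at hle
  exact eq_top_iff.mpr fun y _ ↦
    (hle ▸ mem_top : y ∈ (adjoin L {u}).toSubfield.toIntermediateField hF)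

theorem exists_eq_aeval_div_aeval (hu : u ^ p = algebraMap (RatFunc L) K RatFunc.X)
    (hgen : adjoin (RatFunc L) {u} = ⊤) (y : K) :
    ∃ A B : L[X], B ≠ 0 ∧ y = aeval u A / aeval u B := by
  have hy : y ∈ adjoin L {u} := adjoin_simple_eq_top_of_pow_eq_X hu hgen ▸ mem_top
  have hu' := transcendental_of_pow_eq_X hu
  set f := (RatFunc.algEquivOfTranscendental u hu').symm ⟨y, hy⟩
  refine ⟨f.num, f.denom, f.denom_ne_zero, ?_⟩
  rw [← RatFunc.algEquivOfTranscendental_apply u hu', AlgEquiv.apply_symm_apply]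

variable [hp : Fact p.Prime]

theorem algebraMap_norm_aeval {ζ : L} (hζ : IsPrimitiveRoot ζ p)
    (hu : u ^ p = algebraMap (RatFunc L) K RatFunc.X) (hgen : adjoin (RatFunc L) {u} = ⊤)
    (Q : L[X]) :
    algebraMap (RatFunc L) K (Algebra.norm (RatFunc L) (aeval u Q)) =
      aeval u (∏ m : ZMod p, Q.comp (C (ζ ^ m.val) * X)) := by
  have H := RatFunc.irreducible_X_pow_sub_C_X (L := L) hp.out
  have hζF := hζ.map_of_injective (algebraMap L (RatFunc L)).injective
  have := isSplittingField_X_pow_sub_C_of_adjoin_eq_top hp.out.ne_zero hζF hu hgen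
  have := IsSplittingField.finiteDimensional K (X ^ p - C (RatFunc.X : RatFunc L))
  have := isGalois_of_isSplittingField_X_pow_sub_C
    ⟨_, (mem_primitiveRoots hp.out.pos).mpr hζF⟩ H K
  rw [Algebra.norm_eq_prod_automorphisms, map_prod]
  refine Fintype.prod_equiv ((autEquivZmod H K hζF).toEquiv.trans Multiplicative.toAdd) _ _
    fun σ ↦ ?_
  set m := Multiplicative.toAdd (autEquivZmod H K hζF σ)
  have hσ : σ = (autEquivZmod H K hζF).symm (Multiplicative.ofAdd (m.val : ZMod p)) := by
    simp [m]
  have hσu : σ u = algebraMap L K (ζ ^ m.val) * u := by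
    rw [hσ, autEquivZmod_symm_apply_natCast H K hu hζF, Algebra.smul_def, ← map_pow,
      ← IsScalarTower.algebraMap_apply]
  change (σ.toAlgHom.restrictScalars L) (aeval u Q) = aeval u (Q.comp (C (ζ ^ m.val) * X))
  rw [aeval_comp, ← aeval_algHom_apply]
  simp [hσu]

theorem exists_pow_eq_of_norm_eq_algebraMap {ζ : L} (hζ : IsPrimitiveRoot ζ p)
    (hu : u ^ p = algebraMap (RatFunc L) K RatFunc.X) (hgen : adjoin (RatFunc L) {u} = ⊤)
    {x : K} {a : L} (hx : Algebra.norm (RatFunc L) x = algebraMap L (RatFunc L) a) :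
    ∃ t : L, t ^ p = a := by
  rcases eq_or_ne a 0 with rfl | ha
  · exact ⟨0, zero_pow hp.out.ne_zero⟩
  obtain ⟨A, B, hB, rfl⟩ := exists_eq_aeval_div_aeval hu hgen x
  have hθ : Function.Injective (aeval (R := L) u) :=
    transcendental_iff_injective.mp (transcendental_of_pow_eq_X hu)
  have key : C a * ∏ m : ZMod p, B.comp (C (ζ ^ m.val) * X) =
      ∏ m : ZMod p, A.comp (C (ζ ^ m.val) * X) := by
    apply hθ
    rw [map_mul, aeval_C, ← algebraMap_norm_aeval hζ hu hgen, ← algebraMap_norm_aeval hζ hu hgen,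
      IsScalarTower.algebraMap_apply L (RatFunc L) K, ← hx, ← map_mul, ← map_mul,
      div_mul_cancel₀ _ ((map_ne_zero_iff _ hθ).mpr hB)]
  simpa using exists_pow_card_eq_of_C_mul_prod_comp_eq Finset.univ_nonempty
    (fun m _ ↦ pow_ne_zero _ (hζ.ne_zero hp.out.ne_zero)) hB ha key

end PthRootOfX

/-- Let `p` be a prime, let `F = ℚ(ξ_p)(X)` be the rational function
field in one variable over the `p`-th cyclotomic field, and let `K = F(X^{1/p})` be
obtained by adjoining a `p`-th root `u` of `X` (i.e. `K/F` is generated by an element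
`u` with `u^p = X`).  Then `K/F` is a cyclic Galois extension of degree `p`, and for
every primitive `p`-th root of unity `ζ ∈ F` one has `ζ ∉ N_{K/F}(K×)`; that is,
`m(K/F) = 0`. -/
theorem statement5 (p : ℕ) (hp : p.Prime) (K : Type) [Field K]
    [Algebra (RatFunc (CyclotomicField p ℚ)) K]
    (u : K)
    (hu : u ^ p = algebraMap (RatFunc (CyclotomicField p ℚ)) K RatFunc.X)
    (hgen : IntermediateField.adjoin (RatFunc (CyclotomicField p ℚ)) {u} = ⊤) :
    IsGalois (RatFunc (CyclotomicField p ℚ)) K ∧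
    Module.finrank (RatFunc (CyclotomicField p ℚ)) K = p ∧
    IsCyclic (K ≃ₐ[RatFunc (CyclotomicField p ℚ)] K) ∧
    (∃ ζ : RatFunc (CyclotomicField p ℚ), IsPrimitiveRoot ζ p) ∧
    ∀ ζ : RatFunc (CyclotomicField p ℚ), IsPrimitiveRoot ζ p →
      ¬ ∃ x : K, Algebra.norm (RatFunc (CyclotomicField p ℚ)) x = ζ := by
  have : Fact p.Prime := ⟨hp⟩
  -- Not found by instance search, which picks another `Algebra ℚ (CyclotomicField p ℚ)`.
  have : IsCyclotomicExtension {p} ℚ (CyclotomicField p ℚ) :=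
    CyclotomicField.isCyclotomicExtension p ℚ
  have hζ := IsCyclotomicExtension.zeta_spec p ℚ (CyclotomicField p ℚ)
  have hinj := (algebraMap (CyclotomicField p ℚ) (RatFunc (CyclotomicField p ℚ))).injective
  have hζF := hζ.map_of_injective hinj
  have hroots := (⟨_, (mem_primitiveRoots hp.pos).mpr hζF⟩ : (primitiveRoots p _).Nonempty)
  have H := RatFunc.irreducible_X_pow_sub_C_X (L := CyclotomicField p ℚ) hp
  have := isSplittingField_X_pow_sub_C_of_adjoin_eq_top hp.ne_zero hζF hu hgen
  refine ⟨isGalois_of_isSplittingField_X_pow_sub_C hroots H K,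
    finrank_of_isSplittingField_X_pow_sub_C hroots H K,
    isCyclic_of_isSplittingField_X_pow_sub_C hroots H K, ⟨_, hζF⟩, ?_⟩
  rintro ζ' hζ' ⟨x, hx⟩
  obtain ⟨i, -, rfl⟩ := hζF.eq_pow_of_pow_eq_one hζ'.pow_eq_one
  rw [← map_pow] at hx hζ'
  let : Algebra (CyclotomicField p ℚ) K := ((algebraMap (RatFunc (CyclotomicField p ℚ)) K).comp
    (algebraMap (CyclotomicField p ℚ) (RatFunc (CyclotomicField p ℚ)))).toAlgebra
  have : IsScalarTower (CyclotomicField p ℚ) (RatFunc (CyclotomicField p ℚ)) K :=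
    .of_algebraMap_eq fun _ ↦ rfl
  obtain ⟨t, ht⟩ := exists_pow_eq_of_norm_eq_algebraMap hζ hu hgen hx
  exact (hζ'.of_map_of_injective hinj).pow_ne_of_isCyclotomicExtension_rat t ht
end

section
/- Let p be a prime and K/F a cyclic Galois extension of degree p^n (n ≥ 1) with ξ_p ∈ F, and let K_1 be the intermediate field with [K_1 : F] = p. Suppose (as is furnished by local class field theory when F is a local field) that the quotient group F×/N_{K/F}(K×) is cyclic of order p^n and that the quotient group K_1×/N_{K/K_1}(K×) has order p^{n−1}. If ξ_p ∉ N_{K/F}(K×), then ξ_p ∈ N_{K/K_1}(K×). In particular, under these hypotheses m(K/F) ∈ {−∞, 0}. -/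
/-!
Since `Gal(K/F)` is abelian, `N_{K/F}(x) = N_{K/K₁}(∏ g x)` where `g` runs over coset
representatives of `Gal(K/K₁)`; hence `N_{K/F}(K×) ⊆ N_{K/K₁}(K×)`. In the cyclic group
`F×/N_{K/F}(K×)` of order `p^n`, the `p`-torsion class of `ξ_p` is a `p^(n-1)`-th power, so
`ξ_p = w^(p^(n-1)) · N_{K/F}(k)`. Both factors lie in `N_{K/K₁}(K×)`: the second by the inclusion
above, the first because `K₁×/N_{K/K₁}(K×)` has order `p^(n-1)`.
-/

theorem Subgroup.prod_eq_prod_quotient_prod {G M : Type*} [Group G] [Fintype G] [CommMonoid M]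
    (H : Subgroup G) [Fintype (G ⧸ H)] [Fintype H] (f : G → M) :
    ∏ g, f g = ∏ q : G ⧸ H, ∏ h : H, f (q.out * h) := by
  rw [← Fintype.prod_prod_type']
  refine (Fintype.prod_bijective (fun x : (G ⧸ H) × H => x.1.out * x.2) ?_ _ _ fun _ => rfl).symm
  refine ⟨fun ⟨q, h⟩ ⟨q', h'⟩ hqh => ?_, fun g => ?_⟩
  · have hq : q = q' := by
      simpa [QuotientGroup.mk_mul_of_mem _ h.2, QuotientGroup.mk_mul_of_mem _ h'.2] using
        congrArg (QuotientGroup.mk (s := H)) hqh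
    subst hq
    simpa using hqh
  · refine ⟨((g : G ⧸ H), ⟨(g : G ⧸ H).out⁻¹ * g, ?_⟩), by simp⟩
    exact QuotientGroup.eq.mp (QuotientGroup.out_eq' _)

theorem IsCyclic.exists_pow_card_div_eq {G : Type*} [Group G] [IsCyclic G] [Finite G] {d : ℕ}
    (hd : d ∣ Nat.card G) {g : G} (hg : g ^ d = 1) : ∃ v : G, v ^ (Nat.card G / d) = g := by
  obtain ⟨t, ht⟩ := IsCyclic.exists_generator (α := G)
  obtain ⟨k, rfl⟩ := mem_powers_iff_mem_zpowers.mpr (ht g)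
  have hcard : Nat.card G ∣ d * k := by
    rw [← orderOf_eq_card_of_forall_mem_zpowers ht, mul_comm]
    exact orderOf_dvd_of_pow_eq_one (by rwa [pow_mul])
  have hdiv : Nat.card G / d ∣ k :=
    (Nat.div_dvd_iff_dvd_mul hd (Nat.pos_of_dvd_of_pos hd Nat.card_pos)).mpr hcard
  exact ⟨t ^ (k / (Nat.card G / d)), by rw [← pow_mul, Nat.div_mul_cancel hdiv]⟩

theorem MonoidHom.map_mem_of_pow_eq_one {A B : Type*} [CommGroup A] [CommGroup B] (φ : A →* B)
    {N : Subgroup A} {N' : Subgroup B} (hN : N.map φ ≤ N') [Finite (A ⧸ N)] [IsCyclic (A ⧸ N)]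
    {d : ℕ} (hd : d ∣ Nat.card (A ⧸ N)) (hN' : Nat.card (B ⧸ N') ∣ Nat.card (A ⧸ N) / d)
    {u : A} (hu : u ^ d = 1) : φ u ∈ N' := by
  obtain ⟨v, hv⟩ := IsCyclic.exists_pow_card_div_eq hd (g := (u : A ⧸ N))
    (by rw [← QuotientGroup.mk_pow, hu, QuotientGroup.mk_one])
  obtain ⟨w, rfl⟩ := QuotientGroup.mk_surjective v
  obtain ⟨c, hc⟩ := hN'
  have hw : φ w ^ (Nat.card (A ⧸ N) / d) ∈ N' := by
    rw [← QuotientGroup.eq_one_iff, QuotientGroup.mk_pow, hc, pow_mul, pow_card_eq_one', one_pow]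
  have hk : (w ^ (Nat.card (A ⧸ N) / d))⁻¹ * u ∈ N :=
    QuotientGroup.eq.mp (by rw [QuotientGroup.mk_pow, hv])
  simpa using N'.mul_mem hw (hN (Subgroup.mem_map_of_mem φ hk))

section AbelianNorm

variable {F K : Type*} [Field F] [Field K] [Algebra F K] [FiniteDimensional F K] [IsGalois F K]
  [IsMulCommutative (K ≃ₐ[F] K)]

theorem Algebra.exists_algebraMap_norm_eq_algebraMap_norm (E : IntermediateField F K) (x : K) :
    ∃ y : K, algebraMap E K (Algebra.norm E y) = algebraMap F K (Algebra.norm F x) := by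
  classical
  refine ⟨∏ q : (K ≃ₐ[F] K) ⧸ E.fixingSubgroup, q.out x, ?_⟩
  rw [Algebra.norm_eq_prod_automorphisms, Algebra.norm_eq_prod_automorphisms,
    E.fixingSubgroup.prod_eq_prod_quotient_prod,
    ← Fintype.prod_equiv E.fixingSubgroupEquiv.toEquiv (fun h => (h : K ≃ₐ[F] K) _) _
      fun _ => rfl, Finset.prod_comm]
  simp only [map_prod]
  refine Finset.prod_congr rfl fun h _ => Finset.prod_congr rfl fun q _ => ?_
  rw [← AlgEquiv.mul_apply, mul_comm']

theorem Units.map_range_map_norm_le (E : IntermediateField F K) :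
    (Units.map (Algebra.norm F : K →* F)).range.map (Units.map (algebraMap F E : F →* E)) ≤
      (Units.map (Algebra.norm E : K →* E)).range := by
  rintro _ ⟨_, ⟨x, rfl⟩, rfl⟩
  obtain ⟨y, hyK⟩ := Algebra.exists_algebraMap_norm_eq_algebraMap_norm E (x : K)
  have hy : Algebra.norm E y = algebraMap F E (Algebra.norm F (x : K)) := by
    apply (algebraMap E K).injective
    rwa [← IsScalarTower.algebraMap_apply]
  have hy0 : y ≠ 0 := by
    rw [← Algebra.norm_ne_zero_iff (R := E), hy]
    simp
  exact ⟨Units.mk0 y hy0, Units.ext hy⟩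

end AbelianNorm

theorem statement6_general (p n : ℕ) (hp : p.Prime) (hn : 1 ≤ n)
    (F K : Type) [Field F] [Field K] [Algebra F K] [IsGalois F K]
    (σ : K ≃ₐ[F] K) (hσ : ∀ τ : K ≃ₐ[F] K, τ ∈ Subgroup.zpowers σ)
    (hdeg : Module.finrank F K = p ^ n)
    (ζ : F) (hζ : IsPrimitiveRoot ζ p)
    (K₁ : IntermediateField F K)
    (hcyc : IsCyclic (Fˣ ⧸ (Units.map (Algebra.norm F : K →* F)).range))
    (hcardF : Nat.card (Fˣ ⧸ (Units.map (Algebra.norm F : K →* F)).range) = p ^ n)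
    (hcardK₁ : Nat.card ((↥K₁)ˣ ⧸ (Units.map (Algebra.norm K₁ : K →* K₁)).range)
        = p ^ (n - 1)) :
    (¬ ∃ x : K, Algebra.norm F x = ζ) →
      ∃ x : K, (Algebra.norm K₁ x : K) = algebraMap F K ζ := by
  intro _
  have : FiniteDimensional F K := .of_finrank_pos (by rw [hdeg]; exact pow_pos hp.pos n)
  have : IsCyclic (K ≃ₐ[F] K) := ⟨σ, hσ⟩
  have : Finite (Fˣ ⧸ (Units.map (Algebra.norm F : K →* F)).range) :=
    Nat.finite_of_card_ne_zero (by rw [hcardF]; exact pow_ne_zero n hp.ne_zero)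
  have hp_dvd : p ∣ p ^ n := dvd_pow_self p (by omega)
  have hcard_div : p ^ n / p = p ^ (n - 1) := by
    rw [Nat.div_eq_iff_eq_mul_left hp.pos hp_dvd, ← pow_succ, Nat.sub_add_cancel hn]
  obtain ⟨⟨y, _⟩, hζy⟩ := (Units.map (algebraMap F K₁ : F →* K₁)).map_mem_of_pow_eq_one
    (Units.map_range_map_norm_le K₁) (hcardF ▸ hp_dvd) (by rw [hcardF, hcard_div, hcardK₁])
    (hζ.isUnit_unit hp.ne_zero).pow_eq_one
  exact ⟨y, by simpa using congrArg (fun u : K₁ˣ => ((u : K₁) : K)) hζy⟩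

/-- Let `p` be a prime and `K/F` a cyclic Galois extension of degree
`p^n` (`n ≥ 1`), with `Gal(K/F) = ⟨σ⟩` and `ξ_p = ζ ∈ F` a primitive `p`-th root of
unity, and let `K₁` be the intermediate field with `[K₁ : F] = p` (the fixed field of
`⟨σ^p⟩`).  Suppose (as is furnished by local class field theory when `F` is a local
field) that `F×/N_{K/F}(K×)` is cyclic of order `p^n` and that `K₁×/N_{K/K₁}(K×)`
has order `p^(n−1)`.  If `ζ ∉ N_{K/F}(K×)`, then `ζ ∈ N_{K/K₁}(K×)`.
(In particular, under these hypotheses `m(K/F) ∈ {−∞, 0}`.) -/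
theorem statement6 (p n : ℕ) (hp : p.Prime) (hn : 1 ≤ n)
    (F K : Type) [Field F] [Field K] [Algebra F K] [IsGalois F K]
    (σ : K ≃ₐ[F] K) (hσ : ∀ τ : K ≃ₐ[F] K, τ ∈ Subgroup.zpowers σ)
    (hdeg : Module.finrank F K = p ^ n)
    (ζ : F) (hζ : IsPrimitiveRoot ζ p)
    (K₁ : IntermediateField F K)
    (hK₁ : K₁ = IntermediateField.fixedField (Subgroup.zpowers (σ ^ p)))
    (hcyc : IsCyclic (Fˣ ⧸ (Units.map (Algebra.norm F : K →* F)).range))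
    (hcardF : Nat.card (Fˣ ⧸ (Units.map (Algebra.norm F : K →* F)).range) = p ^ n)
    (hcardK₁ : Nat.card ((↥K₁)ˣ ⧸ (Units.map (Algebra.norm K₁ : K →* K₁)).range)
        = p ^ (n - 1)) :
    (¬ ∃ x : K, Algebra.norm F x = ζ) →
      ∃ x : K, (Algebra.norm K₁ x : K) = algebraMap F K ζ :=
  statement6_general p n hp hn F K σ hσ hdeg ζ hζ K₁ hcyc hcardF hcardK₁
end

section
/- Let a, b, q be positive integers with a = bq, and let i, j be integers with 0 ≤ i < a and 0 ≤ j < a. Then, with ⌊·⌋ denoting integer division, q·⌊(i+j)/a⌋ + ⌊((i+j) mod a)/b⌋ = ⌊((i mod b) + (j mod b))/b⌋ + ⌊i/b⌋ + ⌊j/b⌋. -/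
/-- Let `a, b, q` be positive integers with `a = bq` and let
`0 ≤ i, j < a`.  Then, with `/` denoting integer (floor) division and `%` the remainder,
`q·⌊(i+j)/a⌋ + ⌊((i+j) mod a)/b⌋ = ⌊((i mod b) + (j mod b))/b⌋ + ⌊i/b⌋ + ⌊j/b⌋`. -/
theorem statement8 (a b q i j : ℕ) (hb : 0 < b) (hq : 0 < q) (ha : a = b * q)
    (hi : i < a) (hj : j < a) :
    q * ((i + j) / a) + ((i + j) % a) / b = (i % b + j % b) / b + i / b + j / b := by
  subst ha
  have h1 : (i + j) / b = q * ((i + j) / (b*q)) + ((i + j) % (b*q)) / b := by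
    conv_lhs => rw [← Nat.div_add_mod (i + j) (b*q), mul_assoc, Nat.mul_add_div hb]
  have h2 : (i + j) / b = (i / b + j / b) + (i % b + j % b) / b := by
    conv_lhs => rw [← Nat.div_add_mod i b, ← Nat.div_add_mod j b]
    rw [show b * (i / b) + i % b + (b * (j / b) + j % b)
        = b * (i / b + j / b) + (i % b + j % b) by ring, Nat.mul_add_div hb]
  omega
end

section
/- Let a = bq with b, q ≥ 1, let G = Z/aZ be the cyclic group of order a (written additively, with canonical representatives x̄ ∈ {0,…,a−1}), let M be an abelian group (written multiplicatively, with trivial G-action), and let α ∈ M. Define two functions G × G → M by Ψ_α(x, y) = α^{⌊((x̄ mod b) + (ȳ mod b))/b⌋} and Φ_{α^q}(x, y) = (α^q)^{⌊(x̄ + ȳ)/a⌋}. Then Ψ_α and Φ_{α^q} are cohomologous 2-cocycles: there exists γ : G → M (namely γ(x) = α^{⌊x̄/b⌋}) such that Φ_{α^q}(x, y) = Ψ_α(x, y) · γ(x) · γ(y) · γ(x + y)^{-1} for all x, y ∈ G. In particular they define the same class in H²(G, M). -/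
private lemma aux1 (b u v w : ℕ) (hb : 0 < b) :
    (v + w) / b + (u + (v + w) % b) / b = (u + v + w) / b := by
  have h := Nat.mod_add_div (v + w) b
  have : u + v + w = (u + (v + w) % b) + b * ((v + w) / b) := by omega
  rw [this, Nat.add_mul_div_left _ _ hb, Nat.add_comm]

private lemma aux2 (b u v w : ℕ) (hb : 0 < b) :
    (u + v) / b + ((u + v) % b + w) / b = (u + v + w) / b := by
  have h := Nat.mod_add_div (u + v) b
  have : u + v + w = ((u + v) % b + w) + b * ((u + v) / b) := by omega
  rw [this, Nat.add_mul_div_left _ _ hb, Nat.add_comm]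

/-- Let `a = bq` with `b, q ≥ 1`, let `G = ℤ/aℤ` (with canonical
representatives `x̄ = ZMod.val x ∈ {0,…,a−1}`), let `M` be an abelian group (written
multiplicatively, trivial `G`-action) and `α ∈ M`.  Define
`Ψ_α(x,y) = α^{⌊((x̄ mod b)+(ȳ mod b))/b⌋}` and `Φ_{α^q}(x,y) = (α^q)^{⌊(x̄+ȳ)/a⌋}`.
Then `Ψ_α` and `Φ_{α^q}` are 2-cocycles, and they are cohomologous via
`γ(x) = α^{⌊x̄/b⌋}`:  `Φ_{α^q}(x,y) = Ψ_α(x,y)·γ(x)·γ(y)·γ(x+y)⁻¹` for all `x, y`.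
In particular they define the same class in `H²(G, M)`. -/
theorem statement10 (a b q : ℕ) (hb : 0 < b) (hq : 0 < q) (ha : a = b * q)
    (M : Type) [CommGroup M] (α : M)
    (Ψ Φ : ZMod a → ZMod a → M)
    (hΨ : ∀ x y : ZMod a, Ψ x y = α ^ ((x.val % b + y.val % b) / b))
    (hΦ : ∀ x y : ZMod a, Φ x y = (α ^ q) ^ ((x.val + y.val) / a)) :
    (∀ x y z : ZMod a, Ψ y z * Ψ x (y + z) = Ψ x y * Ψ (x + y) z) ∧
    (∀ x y z : ZMod a, Φ y z * Φ x (y + z) = Φ x y * Φ (x + y) z) ∧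
    ∃ γ : ZMod a → M, (∀ x : ZMod a, γ x = α ^ (x.val / b)) ∧
      ∀ x y : ZMod a, Φ x y = Ψ x y * γ x * γ y * (γ (x + y))⁻¹ := by
  have ha0 : 0 < a := by rw [ha]; exact Nat.mul_pos hb hq
  haveI : NeZero a := ⟨ha0.ne'⟩
  have hdvd : b ∣ a := ⟨q, ha⟩
  have hval : ∀ u v : ZMod a, (u + v).val = (u.val + v.val) % a := fun u v =>
    ZMod.val_add u v
  refine ⟨?_, ?_, fun x => α ^ (x.val / b), fun _ => rfl, ?_⟩
  · intro x y z
    simp only [hΨ, ← pow_add]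
    congr 1
    rw [hval, hval, Nat.mod_mod_of_dvd _ hdvd, Nat.mod_mod_of_dvd _ hdvd,
      Nat.add_mod (y.val) (z.val) b, Nat.add_mod (x.val) (y.val) b,
      aux1 b _ _ _ hb, aux2 b _ _ _ hb]
  · intro x y z
    simp only [hΦ, ← pow_add]
    congr 1
    rw [hval, hval, aux1 a _ _ _ ha0, aux2 a _ _ _ ha0]
  · intro x y
    rw [hΦ, hΨ, eq_mul_inv_iff_mul_eq, ← pow_mul, ← pow_add, ← pow_add, ← pow_add]
    congr 1
    rw [hval]
    set X := x.val
    set Y := y.val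
    -- LHS: q * ((X+Y)/a) + ((X+Y)%a)/b; RHS: (X%b+Y%b)/b + X/b + Y/b
    have h1 : (X + Y) / b = q * ((X + Y) / a) + (X + Y) % a / b := by
      have h := Nat.mod_add_div (X + Y) a
      have hm : a * ((X + Y) / a) = b * (q * ((X + Y) / a)) := by rw [ha, mul_assoc]
      have hKR : X + Y = (X + Y) % a + b * (q * ((X + Y) / a)) := by omega
      conv_lhs => rw [hKR]
      rw [Nat.add_mul_div_left _ _ hb, Nat.add_comm]
    have h2 : (X + Y) / b = X / b + Y / b + (X % b + Y % b) / b := by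
      have h1' := Nat.mod_add_div X b
      have h2' := Nat.mod_add_div Y b
      have hm : b * (X / b + Y / b) = b * (X / b) + b * (Y / b) := Nat.mul_add ..
      have hKR : X + Y = (X % b + Y % b) + b * (X / b + Y / b) := by omega
      conv_lhs => rw [hKR]
      rw [Nat.add_mul_div_left _ _ hb, Nat.add_comm]
    omega
end

section
/- Let p be a prime, n ≥ 1, and t ∈ {0, 1, …, n−1}. Let F be a field containing a primitive p^{n−t}-th root of unity but containing no primitive p^{n−t+1}-th root of unity. Let ψ : Z/p^nZ → GL_{p^n}(F) be an injective group homomorphism, and let the cyclic group C = Z/p^nZ act on the rational function field L = F(μ_1, …, μ_{p^n}) by F-algebra automorphisms extending the linear action ψ on the F-vector space spanned by the indeterminates μ_1, …, μ_{p^n}. Let E = L^C, and for 0 ≤ i ≤ n let L_i be the fixed field of the unique subgroup of C of order p^{n−i}, so that E = L_0 ⊆ L_1 ⊆ ⋯ ⊆ L_n = L and [L_i : E] = p^i. Then for each 0 ≤ i ≤ n, ξ_p ∈ N_{L/L_i}(L×) if and only if i ≥ t + 1; that is, m(L/E) = t. -/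
/-!
The norm `N_H x = ∏_{h ∈ H} h • x` from `L` to the fixed field of the subgroup `H` of order
`p^(n-i)` takes the value `ξ` if and only if `ξ` is a `p^(n-i)`-th power in `F`. Norms of
constants give one direction. Conversely, the action on `L` restricts to the polynomial ring `R`
(it substitutes linear forms for the variables), and `R` is a UFD: writing `x = r / s` gives
`N r = ξ N s`, and every prime factor of `r` can be cancelled against an `H`-conjugate prime
factor of `s`, so that `ξ = N w` with `w ∈ R`. Linear substitutions fix constant terms, hence
`ξ = w(0)^(p^(n-i))`. Finally, as `F` contains the `p^(n-t)`-th but not the `p^(n-t+1)`-th roots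
of unity, `ξ` is a `p^k`-th power in `F` exactly when `k < n - t`.
-/

namespace MulSemiringAction

section Norm

variable (G : Type*) {M : Type*} [Fintype G]

def norm [Monoid G] [CommMonoid M] [MulDistribMulAction G M] : M →* M where
  toFun x := ∏ g : G, g • x
  map_one' := by simp
  map_mul' x y := by simp [Finset.prod_mul_distrib]

variable {G}

section Monoid

variable [Monoid G] [CommMonoid M] [MulDistribMulAction G M]

theorem norm_apply (x : M) : norm G x = ∏ g : G, g • x := rfl

theorem dvd_norm (x : M) : x ∣ norm G x := by
  simpa [norm_apply] using Finset.dvd_prod_of_mem (fun g : G => g • x) (Finset.mem_univ 1)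

theorem norm_eq_pow_of_forall_smul_eq {x : M} (hx : ∀ g : G, g • x = x) :
    norm G x = x ^ Fintype.card G := by
  simp [norm_apply, hx]

theorem map_norm {N H : Type*} [CommMonoid N] [MulDistribMulAction G N] [FunLike H M N]
    [MonoidHomClass H M N] (f : H) (hf : ∀ (g : G) x, f (g • x) = g • f x) (x : M) :
    f (norm G x) = norm G (f x) := by
  simp [norm_apply, map_prod, hf]

theorem map_norm_of_forall_map_smul_eq {N H : Type*} [CommMonoid N] [FunLike H M N]
    [MonoidHomClass H M N] (f : H) (hf : ∀ (g : G) x, f (g • x) = f x) (x : M) :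
    f (norm G x) = f x ^ Fintype.card G := by
  simp [norm_apply, map_prod, hf]

end Monoid

theorem norm_smul [Group G] [CommMonoid M] [MulDistribMulAction G M] (g : G) (x : M) :
    norm G (g • x) = norm G x := by
  simp only [norm_apply, smul_smul]
  exact Fintype.prod_equiv (Equiv.mulRight g) _ _ fun _ => rfl

theorem norm_ne_zero [Group G] {R : Type*} [CommRing R] [NoZeroDivisors R] [Nontrivial R]
    [MulSemiringAction G R] {x : R} (hx : x ≠ 0) : norm G x ≠ 0 :=
  Finset.prod_ne_zero_iff.mpr fun g _ => (smul_ne_zero_iff_ne g).mpr hx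

end Norm

theorem exists_norm_eq_of_norm_eq_mul_norm {G R : Type*} [Group G] [Fintype G] [CommRing R]
    [IsDomain R] [UniqueFactorizationMonoid R] [MulSemiringAction G R] {u : R} (hu : IsUnit u)
    {r s : R} (hr : r ≠ 0) (hs : s ≠ 0) (h : norm G r = u * norm G s) : ∃ w, norm G w = u := by
  induction r using UniqueFactorizationMonoid.induction_on_prime generalizing s with
  | h₁ => exact absurd rfl hr
  | h₂ r hr_unit =>
    have hs_unit : IsUnit s := isUnit_of_dvd_unit (dvd_norm s)
      (isUnit_of_mul_isUnit_right (h ▸ hr_unit.map (norm G)))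
    refine ⟨r * ↑hs_unit.unit⁻¹, mul_right_cancel₀ (norm_ne_zero (G := G) hs) ?_⟩
    rw [← map_mul, mul_assoc, hs_unit.val_inv_mul, mul_one, h]
  | h₃ r π hr₀ hπ ih =>
    have hπs : π ∣ norm G s := by
      rw [← hu.dvd_mul_left, ← h]
      exact (dvd_mul_right π r).trans (dvd_norm _)
    obtain ⟨g, -, hg⟩ := hπ.exists_mem_finset_dvd hπs
    obtain ⟨s', rfl⟩ : g⁻¹ • π ∣ s := by
      simpa using map_dvd (MulSemiringAction.toRingHom G R g⁻¹) hg
    rw [map_mul, map_mul, norm_smul, mul_left_comm] at h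
    exact ih hr₀ (right_ne_zero_of_mul hs) (mul_left_cancel₀ (norm_ne_zero hπ.ne_zero) h)

end MulSemiringAction

namespace MvPolynomial

variable {σ R : Type*} [Fintype σ] [DecidableEq σ] [CommSemiring R]

noncomputable def linearSubst : Matrix σ σ R →* (MvPolynomial σ R →+* MvPolynomial σ R) where
  toFun A := (aeval fun j => ∑ k, C (A k j) * X k).toRingHom
  map_one' := ringHom_ext (by simp) (by simp [Matrix.one_apply])
  map_mul' A B := ringHom_ext (by simp) fun j => by
    simp only [AlgHom.toRingHom_eq_coe, RingHom.coe_coe, aeval_X, RingHom.coe_mul,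
      Function.comp_apply, map_sum, map_mul, aeval_C, algebraMap_eq, Matrix.mul_apply,
      Finset.mul_sum, Finset.sum_mul]
    rw [Finset.sum_comm]
    exact Finset.sum_congr rfl fun _ _ => Finset.sum_congr rfl fun _ _ => by ring

theorem linearSubst_C (A : Matrix σ σ R) (c : R) : linearSubst A (C c) = C c := by
  simp [linearSubst]

theorem linearSubst_X (A : Matrix σ σ R) (j : σ) :
    linearSubst A (X j) = ∑ k, C (A k j) * X k := by
  simp [linearSubst]

theorem constantCoeff_linearSubst (A : Matrix σ σ R) (P : MvPolynomial σ R) :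
    constantCoeff (linearSubst A P) = constantCoeff P := by
  rw [← RingHom.comp_apply]
  congr 1
  exact ringHom_ext (by simp [linearSubst_C]) (by simp [linearSubst_X])

end MvPolynomial

open MvPolynomial MulSemiringAction in
theorem exists_norm_eq_C_iff {G σ F : Type*} [Group G] [Fintype G] [Fintype σ] [DecidableEq σ]
    [Field F] [MulSemiringAction G (FractionRing (MvPolynomial σ F))] (ρ : G →* Matrix σ σ F)
    (hfix : ∀ (g : G) (c : F), g • algebraMap (MvPolynomial σ F) (FractionRing (MvPolynomial σ F))
      (C c) = algebraMap (MvPolynomial σ F) (FractionRing (MvPolynomial σ F)) (C c))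
    (hlin : ∀ (g : G) (j : σ), g • algebraMap (MvPolynomial σ F) (FractionRing (MvPolynomial σ F))
      (X j) = algebraMap (MvPolynomial σ F) (FractionRing (MvPolynomial σ F))
        (∑ k, C (ρ g k j) * X k))
    (c : F) :
    (∃ x : FractionRing (MvPolynomial σ F),
        norm G x = algebraMap (MvPolynomial σ F) (FractionRing (MvPolynomial σ F)) (C c)) ↔
      ∃ y : F, y ^ Fintype.card G = c := by
  set ι := algebraMap (MvPolynomial σ F) (FractionRing (MvPolynomial σ F))
  constructor
  · rintro ⟨x, hx⟩
    rcases eq_or_ne c 0 with rfl | hc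
    · exact ⟨0, zero_pow Fintype.card_ne_zero⟩
    let _ : MulSemiringAction G (MvPolynomial σ F) := compHom _ (linearSubst.comp ρ)
    have hι (g : G) (P : MvPolynomial σ F) : ι (g • P) = g • ι P :=
      RingHom.congr_fun (ringHom_ext (f := ι.comp (linearSubst (ρ g)))
        (g := (MulSemiringAction.toRingHom G _ g).comp ι)
        (fun c => by simp [linearSubst_C, hfix]) (fun j => by simp [linearSubst_X, hlin])) P
    obtain ⟨⟨r, s⟩, hrs : x * ι s = ι r⟩ :=
      IsLocalization.surj (nonZeroDivisors (MvPolynomial σ F)) x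
    have hs : (s : MvPolynomial σ F) ≠ 0 := nonZeroDivisors.ne_zero s.2
    have hnorm : norm G r = C c * norm G (s : MvPolynomial σ F) := by
      apply IsFractionRing.injective (MvPolynomial σ F) (FractionRing (MvPolynomial σ F))
      rw [map_mul, map_norm ι hι, map_norm ι hι, ← hrs, map_mul, hx]
    have hr : r ≠ 0 := by
      rintro rfl
      refine mul_ne_zero (C_ne_zero.mpr hc) (norm_ne_zero (G := G) hs) ?_
      simpa [norm_apply] using hnorm.symm
    obtain ⟨w, hw⟩ := exists_norm_eq_of_norm_eq_mul_norm (hc.isUnit.map C) hr hs hnorm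
    refine ⟨constantCoeff w, ?_⟩
    simpa [hw] using (map_norm_of_forall_map_smul_eq (G := G) constantCoeff
      (fun g P => constantCoeff_linearSubst _ P) w).symm
  · rintro ⟨y, rfl⟩
    exact ⟨ι (C y), by rw [norm_eq_pow_of_forall_smul_eq (hfix · y), ← map_pow, ← map_pow]⟩

open Finset in
theorem IsCyclic.card_pow_eq_one_of_dvd {α : Type*} [Group α] [Fintype α] [DecidableEq α]
    [IsCyclic α] {d : ℕ} (hd : d ∣ Fintype.card α) : #{a : α | a ^ d = 1} = d := by
  have hd0 : d ≠ 0 := ne_zero_of_dvd_ne_zero Fintype.card_ne_zero hd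
  calc #{a : α | a ^ d = 1} = ∑ m ∈ d.divisors, #{a : α | orderOf a = m} :=
        (sum_card_orderOf_eq_card_pow_eq_one hd0).symm
    _ = ∑ m ∈ d.divisors, m.totient := sum_congr rfl fun m hm =>
        IsCyclic.card_orderOf_eq_totient ((Nat.dvd_of_mem_divisors hm).trans hd)
    _ = d := Nat.sum_totient d

namespace IsPrimitiveRoot

theorem exists_pow_eq_of_pow_eq_one {R : Type*} [CommRing R] [IsDomain R] {p q : ℕ} {ω ξ : R}
    (hqp : 0 < q * p) (hω : IsPrimitiveRoot ω (q * p)) (hξ : ξ ^ p = 1) : ∃ y, y ^ q = ξ := by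
  have : NeZero p := ⟨(Nat.pos_of_mul_pos_left hqp).ne'⟩
  obtain ⟨j, -, hj⟩ := (hω.pow hqp rfl).eq_pow_of_pow_eq_one hξ
  exact ⟨ω ^ j, by rw [← hj, pow_right_comm]⟩

theorem of_pow_prime_pow_eq {M : Type*} [CommMonoid M] {p k : ℕ} [hp : Fact p.Prime] {y ξ : M}
    (hξ : IsPrimitiveRoot ξ p) (hy : y ^ p ^ k = ξ) : IsPrimitiveRoot y (p ^ (k + 1)) := by
  have hord : orderOf y = p ^ (k + 1) := orderOf_eq_prime_pow
    (hy ▸ hξ.ne_one hp.out.one_lt) (by rw [pow_succ, pow_mul, hy, hξ.pow_eq_one])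
  exact hord ▸ IsPrimitiveRoot.orderOf y

theorem pow_prime_pow_sub {M : Type*} [CommMonoid M] {p a b : ℕ} {ζ : M} (hp : 0 < p)
    (hζ : IsPrimitiveRoot ζ (p ^ a)) (hba : b ≤ a) : IsPrimitiveRoot (ζ ^ p ^ (a - b)) (p ^ b) :=
  hζ.pow (pow_pos hp a) (by rw [← pow_add, Nat.sub_add_cancel hba])

end IsPrimitiveRoot

theorem exists_pow_prime_pow_eq_iff {R : Type*} [CommRing R] [IsDomain R] {p m k : ℕ}
    (hp : p.Prime) (hroot : ∃ ζ : R, IsPrimitiveRoot ζ (p ^ m))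
    (hnoroot : ¬ ∃ ζ : R, IsPrimitiveRoot ζ (p ^ (m + 1))) {ξ : R} (hξ : IsPrimitiveRoot ξ p) :
    (∃ y : R, y ^ p ^ k = ξ) ↔ k < m := by
  have := Fact.mk hp
  constructor
  · rintro ⟨y, hy⟩
    by_contra! hmk
    exact hnoroot ⟨_, (hξ.of_pow_prime_pow_eq hy).pow_prime_pow_sub hp.pos (by omega)⟩
  · intro hkm
    obtain ⟨ζ, hζ⟩ := hroot
    have hω := hζ.pow_prime_pow_sub hp.pos (Nat.succ_le_of_lt hkm)
    rw [pow_succ] at hω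
    exact hω.exists_pow_eq_of_pow_eq_one (Nat.mul_pos (pow_pos hp.pos k) hp.pos) hξ.pow_eq_one

theorem statement12_general (p n t a : ℕ) (hp : p.Prime) (ha : a = p ^ n)
    [NeZero a]
    (F : Type) [Field F]
    (hroot : ∃ ζ : F, IsPrimitiveRoot ζ (p ^ (n - t)))
    (hnoroot : ¬ ∃ ζ : F, IsPrimitiveRoot ζ (p ^ (n - t + 1)))
    (ψ : Multiplicative (ZMod a) →* Matrix.GeneralLinearGroup (Fin a) F)
    [MulSemiringAction (Multiplicative (ZMod a)) (FractionRing (MvPolynomial (Fin a) F))]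
    (hfix : ∀ (g : Multiplicative (ZMod a)) (c : F),
      g • algebraMap (MvPolynomial (Fin a) F) (FractionRing (MvPolynomial (Fin a) F))
            (MvPolynomial.C c)
        = algebraMap (MvPolynomial (Fin a) F) (FractionRing (MvPolynomial (Fin a) F))
            (MvPolynomial.C c))
    (hlin : ∀ (g : Multiplicative (ZMod a)) (j : Fin a),
      g • algebraMap (MvPolynomial (Fin a) F) (FractionRing (MvPolynomial (Fin a) F))
            (MvPolynomial.X j)
        = algebraMap (MvPolynomial (Fin a) F) (FractionRing (MvPolynomial (Fin a) F))
            (∑ k : Fin a,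
              MvPolynomial.C (((ψ g : Matrix (Fin a) (Fin a) F)) k j) *
                MvPolynomial.X k)) :
    ∀ ξ : F, IsPrimitiveRoot ξ p → ∀ i : ℕ, i ≤ n →
      ((∃ x : FractionRing (MvPolynomial (Fin a) F),
          ∏ g : {g : Multiplicative (ZMod a) // g ^ p ^ (n - i) = 1},
            (g : Multiplicative (ZMod a)) • x
          = algebraMap (MvPolynomial (Fin a) F) (FractionRing (MvPolynomial (Fin a) F))
              (MvPolynomial.C ξ)) ↔ t + 1 ≤ i) := by
  intro ξ hξ i hi
  let H := (powMonoidHom (p ^ (n - i)) : Multiplicative (ZMod a) →* _).ker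
  let e : {g : Multiplicative (ZMod a) // g ^ p ^ (n - i) = 1} ≃ H :=
    Equiv.subtypeEquivRight fun _ => by simp [H]
  have hcard : Fintype.card H = p ^ (n - i) := by
    rw [← Fintype.card_congr e, Fintype.card_subtype]
    refine IsCyclic.card_pow_eq_one_of_dvd ?_
    simpa [ha] using pow_dvd_pow p (Nat.sub_le n i)
  have hnorm (x : FractionRing (MvPolynomial (Fin a) F)) :
      ∏ g : {g : Multiplicative (ZMod a) // g ^ p ^ (n - i) = 1}, (g : Multiplicative (ZMod a)) • x
        = MulSemiringAction.norm H x :=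
    Fintype.prod_equiv e _ _ fun _ => rfl
  simp_rw [hnorm]
  rw [exists_norm_eq_C_iff ((Units.coeHom _).comp (ψ.comp H.subtype)) (fun h => hfix h)
    (fun h => hlin h), hcard, exists_pow_prime_pow_eq_iff hp hroot hnoroot hξ]
  omega

/-- Let `p` be a prime, `n ≥ 1`, `t ∈ {0,…,n−1}`, and let `F` be a
field containing a primitive `p^(n−t)`-th root of unity but no primitive
`p^(n−t+1)`-th root of unity.  Let the cyclic group `C` of order `a = p^n` (realized as
`Multiplicative (ZMod a)`) act on the rational function field
`L = F(μ_1, …, μ_{p^n})` (realized as the fraction field of the polynomial ring in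
`a` indeterminates) by `F`-algebra automorphisms extending a faithful linear
representation `ψ : C → GL_{p^n}(F)` on the `F`-span of the indeterminates.  Let
`E = L^C`, and for `0 ≤ i ≤ n` let `L_i` be the fixed field of the unique subgroup
`H_i = {g : C | g^(p^(n−i)) = 1}` of order `p^(n−i)`, so that
`N_{L/L_i}(x) = ∏_{g ∈ H_i} g • x`.  Then for every primitive `p`-th root of unity
`ξ_p ∈ F` and every `0 ≤ i ≤ n`:  `ξ_p ∈ N_{L/L_i}(L×)` if and only if `i ≥ t + 1`;
that is, `m(L/E) = t`. -/
theorem statement12 (p n t a : ℕ) (hp : p.Prime) (ht : t < n) (ha : a = p ^ n)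
    [NeZero a]
    (F : Type) [Field F]
    (hroot : ∃ ζ : F, IsPrimitiveRoot ζ (p ^ (n - t)))
    (hnoroot : ¬ ∃ ζ : F, IsPrimitiveRoot ζ (p ^ (n - t + 1)))
    (ψ : Multiplicative (ZMod a) →* Matrix.GeneralLinearGroup (Fin a) F)
    (hψ : Function.Injective ψ)
    [MulSemiringAction (Multiplicative (ZMod a)) (FractionRing (MvPolynomial (Fin a) F))]
    (hfix : ∀ (g : Multiplicative (ZMod a)) (c : F),
      g • algebraMap (MvPolynomial (Fin a) F) (FractionRing (MvPolynomial (Fin a) F))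
            (MvPolynomial.C c)
        = algebraMap (MvPolynomial (Fin a) F) (FractionRing (MvPolynomial (Fin a) F))
            (MvPolynomial.C c))
    (hlin : ∀ (g : Multiplicative (ZMod a)) (j : Fin a),
      g • algebraMap (MvPolynomial (Fin a) F) (FractionRing (MvPolynomial (Fin a) F))
            (MvPolynomial.X j)
        = algebraMap (MvPolynomial (Fin a) F) (FractionRing (MvPolynomial (Fin a) F))
            (∑ k : Fin a,
              MvPolynomial.C (((ψ g : Matrix (Fin a) (Fin a) F)) k j) *
                MvPolynomial.X k)) :
    ∀ ξ : F, IsPrimitiveRoot ξ p → ∀ i : ℕ, i ≤ n →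
      ((∃ x : FractionRing (MvPolynomial (Fin a) F),
          ∏ g : {g : Multiplicative (ZMod a) // g ^ p ^ (n - i) = 1},
            (g : Multiplicative (ZMod a)) • x
          = algebraMap (MvPolynomial (Fin a) F) (FractionRing (MvPolynomial (Fin a) F))
              (MvPolynomial.C ξ)) ↔ t + 1 ≤ i) :=
  statement12_general p n t a hp ha F hroot hnoroot ψ hfix hlin
end

section
/- Let √17 denote the positive real square root of 17 and let K = Q(α) ⊆ C where α² = −(17 + √17). Then K/Q is a Galois extension of degree 4 with cyclic Galois group, Q(√17) is its unique quadratic subfield, and −1 ∉ N_{K/Q(√17)}(K×). Consequently, for p = 2 and this tower Q ⊂ Q(√17) ⊂ K, one has m(K/Q) = 1. -/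
/-!
`α` is a root of `X⁴ + 34X² + 272`, irreducible by Eisenstein at `17`, and
`α ↦ -α(α² + 18)/4 = α(√17 - 1)/4` defines an automorphism `σ` of `K = ℚ(α)` of order `4`, so
`K/ℚ` is cyclic quartic and has a unique quadratic subfield, the fixed field of `σ²`. Since
`α² < 0`, `α` is purely imaginary and `σ²` is complex conjugation on `K`. Hence the norm from `K`
to its quadratic subfield is `x x̄ = |x|² ≥ 0`, and the norm to `ℚ` is `|x|² |σ x|² ≥ 0`;
neither can be `-1`.
-/

open Polynomial IntermediateField Module Finset
open scoped ComplexConjugate ComplexOrder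

theorem Subgroup.eq_of_card_eq_of_isCyclic {G : Type*} [Group G] [Finite G] [IsCyclic G]
    {H₁ H₂ : Subgroup G} (h : Nat.card H₁ = Nat.card H₂) : H₁ = H₂ := by
  classical
  have := Fintype.ofFinite G
  suffices key : ∀ H : Subgroup G, (H : Set G) = {g | g ^ Nat.card H = 1} by
    rw [← SetLike.coe_set_eq, key, key, h]
  intro H
  refine Set.eq_of_subset_of_ncard_le (fun g hg => ?_) ?_
  · exact congrArg Subtype.val (pow_card_eq_one' (G := H) (x := ⟨g, hg⟩))
  · rw [Set.ncard_eq_toFinset_card', Set.toFinset_ofPred, ← Nat.card_coe_set_eq,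
      SetLike.coe_sort_coe]
    exact IsCyclic.card_pow_eq_one_le Nat.card_pos

theorem algebraMap_norm_eq_prod_pow_of_orderOf_eq_finrank {F L : Type*} [Field F] [Field L]
    [Algebra F L] [FiniteDimensional F L] [IsGalois F L] {σ : Gal(L/F)}
    (hσ : orderOf σ = finrank F L) (x : L) :
    algebraMap F L (Algebra.norm F x) = ∏ i ∈ range (finrank F L), (σ ^ i) x := by
  have hinj : Function.Injective fun i : Fin (finrank F L) => σ ^ (i : ℕ) := fun i j hij =>
    Fin.ext (pow_injOn_Iio_orderOf (by simp [hσ]) (by simp [hσ]) hij)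
  have hbij : Function.Bijective fun i : Fin (finrank F L) => σ ^ (i : ℕ) := by
    rw [Fintype.bijective_iff_injective_and_card, Fintype.card_fin, ← Nat.card_eq_fintype_card,
      IsGalois.card_aut_eq_finrank]
    exact ⟨hinj, rfl⟩
  rw [Algebra.norm_eq_prod_automorphisms, Finset.prod_range]
  exact (Fintype.prod_bijective _ hbij _ _ fun _ => rfl).symm

theorem norm_nonneg_of_pow_half_eq_conj {F L : Type*} [Field F] [Field L]
    [Algebra F L] [FiniteDimensional F L] [IsGalois F L] (ι : L →+* ℂ) {σ : Gal(L/F)} {m : ℕ}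
    (hσ : orderOf σ = finrank F L) (hL : finrank F L = 2 * m)
    (hconj : ∀ x, ι ((σ ^ m) x) = conj (ι x)) (x : L) :
    0 ≤ ι (algebraMap F L (Algebra.norm F x)) := by
  rw [algebraMap_norm_eq_prod_pow_of_orderOf_eq_finrank hσ, map_prod, hL, two_mul,
    prod_range_add, ← prod_mul_distrib]
  refine prod_nonneg fun i _ => ?_
  rw [pow_add, AlgEquiv.mul_apply, hconj, Complex.mul_conj]
  exact_mod_cast Complex.normSq_nonneg _

theorem norm_ne_neg_one_of_pow_half_eq_conj {F L : Type*} [Field F] [Field L]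
    [Algebra F L] [FiniteDimensional F L] [IsGalois F L] (ι : L →+* ℂ) {σ : Gal(L/F)} {m : ℕ}
    (hσ : orderOf σ = finrank F L) (hL : finrank F L = 2 * m)
    (hconj : ∀ x, ι ((σ ^ m) x) = conj (ι x)) (x : L) :
    Algebra.norm F x ≠ -1 := by
  intro h
  have := norm_nonneg_of_pow_half_eq_conj ι hσ hL hconj x
  rw [h, map_neg, map_one, map_neg, map_one] at this
  norm_num at this

theorem IntermediateField.eq_of_finrank_eq_of_isCyclic {F L : Type*} [Field F] [Field L]
    [Algebra F L] [FiniteDimensional F L] [IsGalois F L] [IsCyclic Gal(L/F)]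
    {E₁ E₂ : IntermediateField F L} (h : finrank F E₁ = finrank F E₂) : E₁ = E₂ := by
  have hcodeg : finrank E₁ L = finrank E₂ L := by
    have h₁ := finrank_mul_finrank F E₁ L
    have h₂ := finrank_mul_finrank F E₂ L
    rw [h, ← h₂] at h₁
    exact Nat.eq_of_mul_eq_mul_left finrank_pos h₁
  have hfix : E₁.fixingSubgroup = E₂.fixingSubgroup := Subgroup.eq_of_card_eq_of_isCyclic <| by
    rw [IsGalois.card_fixingSubgroup_eq_finrank, IsGalois.card_fixingSubgroup_eq_finrank, hcodeg]
  rw [← IsGalois.fixedField_fixingSubgroup E₁, hfix, IsGalois.fixedField_fixingSubgroup]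

theorem IntermediateField.eq_of_le_of_finrank_eq_of_isCyclic {F Ω : Type*} [Field F] [Field Ω]
    [Algebra F Ω] {K E₁ E₂ : IntermediateField F Ω} [hfin : FiniteDimensional F K]
    [hgal : IsGalois F K] [hcyc : IsCyclic Gal(K/F)] (h₁ : E₁ ≤ K) (h₂ : E₂ ≤ K)
    (h : finrank F E₁ = finrank F E₂) : E₁ = E₂ := by
  rw [← lift_restrict h₁, ← lift_restrict h₂]
  refine congrArg lift (eq_of_finrank_eq_of_isCyclic ?_)
  rw [← (restrictAlgEquiv h₁).toLinearEquiv.finrank_eq,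
    ← (restrictAlgEquiv h₂).toLinearEquiv.finrank_eq, h]

theorem norm_fixedField_ne_neg_one_of_conj {F L : Type*} [Field F] [Field L]
    [Algebra F L] [FiniteDimensional F L] [IsGalois F L] (ι : L →+* ℂ) {c : Gal(L/F)}
    (hc : orderOf c = 2) (hconj : ∀ x, ι (c x) = conj (ι x)) (x : L) :
    Algebra.norm (fixedField (Subgroup.zpowers c)) x ≠ -1 := by
  set c' := subgroupEquivAlgEquiv _ ⟨c, Subgroup.mem_zpowers c⟩
  have hc' : orderOf c' = 2 := by rw [MulEquiv.orderOf_eq, Subgroup.orderOf_mk, hc]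
  have hL : finrank (fixedField (Subgroup.zpowers c)) L = 2 := by
    rw [finrank_fixedField_eq_card, Nat.card_zpowers, hc]
  exact norm_ne_neg_one_of_pow_half_eq_conj ι (m := 1) (hc'.trans hL.symm) hL (fun y => hconj y) x

theorem IntermediateField.algHom_ext_gen {F E A : Type*} [Field F] [Field E] [Algebra F E]
    [Semiring A] [Algebra F A] {x : E} ⦃φ₁ φ₂ : F⟮x⟯ →ₐ[F] A⦄
    (h : φ₁ (AdjoinSimple.gen F x) = φ₂ (AdjoinSimple.gen F x)) : φ₁ = φ₂ :=
  adjoin_algHom_ext F fun _ hy => by rw [Set.mem_singleton_iff] at hy; subst hy; exact h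

theorem Complex.conj_eq_neg_of_sq_eq_neg {z : ℂ} {r : ℝ} (hr : 0 < r) (h : z ^ 2 = -r) :
    conj z = -z := by
  have hre : z.re * z.re - z.im * z.im = -r := by simpa [sq] using congrArg Complex.re h
  have him : z.re * z.im = 0 := by
    have := congrArg Complex.im h
    simp only [sq, Complex.mul_im, Complex.neg_im, Complex.ofReal_im] at this
    linarith
  rcases mul_eq_zero.mp him with h0 | h0
  · exact Complex.ext (by simp [h0]) (by simp)
  · nlinarith [mul_self_nonneg z.re]

theorem finrank_adjoin_of_sq_eq {F E : Type*} [Field F] [Field E] [Algebra F E] {x : E} {d : F}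
    (hx : x ^ 2 = algebraMap F E d) (hd : ¬IsSquare d) : finrank F F⟮x⟯ = 2 := by
  have hroot : aeval x (X ^ 2 - C d) = 0 := by simp [hx]
  have hmonic : (X ^ 2 - C d).Monic := monic_X_pow_sub_C d two_ne_zero
  have hirr : Irreducible (X ^ 2 - C d) :=
    X_pow_sub_C_irreducible_of_prime Nat.prime_two fun b hb => hd ⟨b, by rw [← hb, sq]⟩
  rw [adjoin.finrank ⟨_, hmonic, by rwa [← aeval_def]⟩,
    ← minpoly.eq_of_irreducible_of_monic hirr hroot hmonic, natDegree_X_pow_sub_C]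

noncomputable def quartic : ℤ[X] := X ^ 4 + 34 * X ^ 2 + 272

theorem aeval_quartic {A : Type*} [CommRing A] (x : A) :
    aeval x quartic = x ^ 4 + 34 * x ^ 2 + 272 := by
  simp only [quartic, map_add, map_mul, map_pow, aeval_X, map_ofNat]

theorem monic_quartic : quartic.Monic := by unfold quartic; monicity!

theorem natDegree_quartic : quartic.natDegree = 4 := by unfold quartic; compute_degree!

theorem irreducible_quartic : Irreducible quartic := by
  have hdeg : quartic.degree = 4 := by
    rw [degree_eq_natDegree monic_quartic.ne_zero, natDegree_quartic]; rfl
  refine irreducible_of_eisenstein_criterion (P := Ideal.span {17})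
    ((Ideal.span_singleton_prime (by norm_num)).2 (by norm_num)) ?_ ?_ ?_ ?_
    monic_quartic.isPrimitive
  · rw [monic_quartic.leadingCoeff, Ideal.mem_span_singleton]; norm_num
  · intro n hn
    replace hn : n < 4 := by rw [hdeg] at hn; exact_mod_cast hn
    rw [Ideal.mem_span_singleton]
    interval_cases n <;> simp [quartic, coeff_X_pow]
  · rw [hdeg]; norm_num
  · rw [Ideal.span_singleton_pow, Ideal.mem_span_singleton]; simp [quartic]

theorem irreducible_map_quartic : Irreducible (quartic.map (algebraMap ℤ ℚ)) :=
  monic_quartic.isPrimitive.irreducible_iff_irreducible_map_fraction_map.mp irreducible_quartic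

noncomputable def quarticCycle {A : Type*} [Field A] (x : A) : A := -x * (x ^ 2 + 18) / 4

theorem map_quarticCycle {A B F : Type*} [Field A] [Field B] [FunLike F A B] [RingHomClass F A B]
    (f : F) (x : A) :
    f (quarticCycle x) = quarticCycle (f x) := by
  simp [quarticCycle, map_ofNat]

section QuarticCycle

variable {A : Type*} [Field A] [CharZero A] {x : A} (hx : x ^ 4 + 34 * x ^ 2 + 272 = 0)
include hx

theorem quarticCycle_sq : quarticCycle x ^ 2 = -x ^ 2 - 34 := by
  unfold quarticCycle; linear_combination ((x ^ 2 + 2) / 16) * hx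

theorem quarticCycle_root : quarticCycle x ^ 4 + 34 * quarticCycle x ^ 2 + 272 = 0 := by
  linear_combination (quarticCycle x ^ 2 - x ^ 2) * quarticCycle_sq hx + hx

theorem quarticCycle_quarticCycle : quarticCycle (quarticCycle x) = -x := by
  have h := quarticCycle_sq hx
  unfold quarticCycle at h ⊢
  linear_combination (x * (x ^ 2 + 18) / 16) * h - (x / 16) * hx

end QuarticCycle

section QuarticRoot

variable {α : ℂ} (hα : α ^ 4 + 34 * α ^ 2 + 272 = 0)
include hα

theorem minpoly_eq_map_quartic : minpoly ℚ α = quartic.map (algebraMap ℤ ℚ) :=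
  (minpoly.eq_of_irreducible_of_monic irreducible_map_quartic
    (by rw [aeval_map_algebraMap, aeval_quartic, hα]) (monic_quartic.map _)).symm

theorem isIntegral_of_quartic : IsIntegral ℚ α :=
  IsIntegral.tower_top (A := ℚ) ⟨quartic, monic_quartic, by rw [← aeval_def, aeval_quartic, hα]⟩

theorem finrank_adjoin_of_quartic : finrank ℚ ℚ⟮α⟯ = 4 := by
  rw [adjoin.finrank (isIntegral_of_quartic hα), minpoly_eq_map_quartic hα,
    natDegree_map_eq_of_injective (algebraMap ℤ ℚ).injective_int, natDegree_quartic]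

theorem gen_quartic_eq_zero : AdjoinSimple.gen ℚ α ^ 4 + 34 * AdjoinSimple.gen ℚ α ^ 2 + 272 = 0 :=
  Subtype.ext (by push_cast; exact hα)

noncomputable def quarticAut : Gal(ℚ⟮α⟯/ℚ) :=
  have := adjoin.finiteDimensional (isIntegral_of_quartic hα)
  AlgEquiv.ofBijective ((algHomAdjoinIntegralEquiv ℚ (isIntegral_of_quartic hα)).symm
    ⟨quarticCycle (AdjoinSimple.gen ℚ α), by
      rw [mem_aroots, minpoly_eq_map_quartic hα, aeval_map_algebraMap, aeval_quartic]
      exact ⟨(monic_quartic.map _).ne_zero, quarticCycle_root (gen_quartic_eq_zero hα)⟩⟩)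
    (AlgHom.bijective _)

theorem quarticAut_gen :
    quarticAut hα (AdjoinSimple.gen ℚ α) = quarticCycle (AdjoinSimple.gen ℚ α) :=
  algHomAdjoinIntegralEquiv_symm_apply_gen ℚ (isIntegral_of_quartic hα) _

theorem quarticAut_sq_gen :
    (quarticAut hα ^ 2) (AdjoinSimple.gen ℚ α) = -AdjoinSimple.gen ℚ α := by
  rw [pow_two, AlgEquiv.mul_apply, quarticAut_gen, map_quarticCycle, quarticAut_gen,
    quarticCycle_quarticCycle (gen_quartic_eq_zero hα)]

theorem quarticAut_sq_ne_one : quarticAut hα ^ 2 ≠ 1 := by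
  intro h
  have h2 := congrArg Subtype.val (quarticAut_sq_gen hα)
  rw [h, AlgEquiv.one_apply] at h2
  push_cast [AdjoinSimple.coe_gen] at h2
  have hα0 : α = 0 := by linear_combination h2 / 2
  subst hα0
  norm_num at hα

theorem quarticAut_pow_four : quarticAut hα ^ 4 = 1 := by
  have h : (quarticAut hα ^ 4) (AdjoinSimple.gen ℚ α) = AdjoinSimple.gen ℚ α := by
    rw [show 4 = 2 + 2 from rfl, pow_add, AlgEquiv.mul_apply, quarticAut_sq_gen, map_neg,
      quarticAut_sq_gen, neg_neg]
  exact AlgEquiv.coe_toAlgHom_injective (algHom_ext_gen h)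

theorem orderOf_quarticAut : orderOf (quarticAut hα) = 4 :=
  orderOf_eq_prime_pow (p := 2) (n := 1) (quarticAut_sq_ne_one hα) (quarticAut_pow_four hα)

theorem orderOf_quarticAut_sq : orderOf (quarticAut hα ^ 2) = 2 :=
  orderOf_eq_prime (by rw [← pow_mul]; exact quarticAut_pow_four hα) (quarticAut_sq_ne_one hα)

theorem card_gal_adjoin_of_quartic : Nat.card Gal(ℚ⟮α⟯/ℚ) = 4 := by
  have := adjoin.finiteDimensional (isIntegral_of_quartic hα)
  refine le_antisymm ?_ (orderOf_quarticAut hα ▸ orderOf_le_card)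
  rw [Nat.card_eq_fintype_card, ← finrank_adjoin_of_quartic hα]
  exact AlgEquiv.card_le

theorem isGalois_adjoin_of_quartic : IsGalois ℚ ℚ⟮α⟯ :=
  have := adjoin.finiteDimensional (isIntegral_of_quartic hα)
  IsGalois.of_card_aut_eq_finrank _ _
    ((card_gal_adjoin_of_quartic hα).trans (finrank_adjoin_of_quartic hα).symm)

theorem isCyclic_gal_adjoin_of_quartic : IsCyclic Gal(ℚ⟮α⟯/ℚ) :=
  have := adjoin.finiteDimensional (isIntegral_of_quartic hα)
  isCyclic_of_orderOf_eq_card _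
    ((orderOf_quarticAut hα).trans (card_gal_adjoin_of_quartic hα).symm)

theorem quarticAut_sq_apply_eq_conj (hconj : conj α = -α) (x : ℚ⟮α⟯) :
    ((quarticAut hα ^ 2) x : ℂ) = conj (x : ℂ) := by
  have h : (ℚ⟮α⟯.val.comp (quarticAut hα ^ 2).toAlgHom) =
      ((Complex.conjAe.restrictScalars ℚ).toAlgHom.comp ℚ⟮α⟯.val) :=
    algHom_ext_gen (by
      change ((quarticAut hα ^ 2) (AdjoinSimple.gen ℚ α) : ℂ) = conj α
      rw [quarticAut_sq_gen, hconj]; rfl)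
  exact DFunLike.congr_fun h x

theorem finrank_fixedField_quarticAut_sq :
    finrank ℚ (fixedField (Subgroup.zpowers (quarticAut hα ^ 2))) = 2 := by
  have := adjoin.finiteDimensional (isIntegral_of_quartic hα)
  have h := finrank_mul_finrank ℚ (fixedField (Subgroup.zpowers (quarticAut hα ^ 2))) ℚ⟮α⟯
  rw [finrank_fixedField_eq_card, Nat.card_zpowers, orderOf_quarticAut_sq,
    finrank_adjoin_of_quartic hα] at h
  omega

end QuarticRoot

theorem sq_sqrt_seventeen : ((Real.sqrt 17 : ℝ) : ℂ) ^ 2 = 17 := by norm_cast; simp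

theorem finrank_adjoin_sqrt_seventeen : finrank ℚ ℚ⟮((Real.sqrt 17 : ℝ) : ℂ)⟯ = 2 :=
  finrank_adjoin_of_sq_eq (d := 17) (by rw [sq_sqrt_seventeen]; norm_num)
    (by rw [Rat.isSquare_ofNat_iff]; exact (by norm_num : Nat.Prime 17).not_isSquare)

section SqEq

variable {α : ℂ} (hα : α ^ 2 = -((17 : ℂ) + (Real.sqrt 17 : ℝ)))
include hα

theorem quartic_eq_zero_of_sq_eq : α ^ 4 + 34 * α ^ 2 + 272 = 0 := by
  linear_combination (α ^ 2 + 17 - ((Real.sqrt 17 : ℝ) : ℂ)) * hα + sq_sqrt_seventeen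

theorem conj_eq_neg_of_sq_eq : conj α = -α :=
  Complex.conj_eq_neg_of_sq_eq_neg (r := 17 + Real.sqrt 17) (by positivity)
    (by rw [hα]; push_cast; rfl)

theorem sqrt_seventeen_mem_adjoin : ((Real.sqrt 17 : ℝ) : ℂ) ∈ ℚ⟮α⟯ := by
  rw [show ((Real.sqrt 17 : ℝ) : ℂ) = -α ^ 2 - 17 by linear_combination hα]
  exact sub_mem (neg_mem (pow_mem (mem_adjoin_simple_self ℚ α) 2)) (ofNat_mem _ 17)

end SqEq

/-- Let `√17` be the positive real square root of `17` and let
`K = ℚ(α) ⊆ ℂ` where `α² = −(17 + √17)`.  Then `K/ℚ` is a Galois extension of degree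
`4` with cyclic Galois group; `√17 ∈ K` and `ℚ(√17)` is the unique quadratic subfield
of `K`; and `−1 ∉ N_{K/ℚ(√17)}(K×)` (stated for every quadratic subfield of `K`, there
being exactly one).  Moreover `−1 ∉ N_{K/ℚ}(K×)`.  Consequently `m(K/ℚ) = 1` for this
tower `ℚ ⊂ ℚ(√17) ⊂ K` (with `p = 2`). -/
theorem statement14 (α : ℂ) (hα : α ^ 2 = -((17 : ℂ) + (Real.sqrt 17 : ℝ)))
    (K : IntermediateField ℚ ℂ) (hK : K = IntermediateField.adjoin ℚ {α}) :
    IsGalois ℚ (↥K) ∧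
    Module.finrank ℚ (↥K) = 4 ∧
    IsCyclic ((↥K) ≃ₐ[ℚ] (↥K)) ∧
    ((Real.sqrt 17 : ℝ) : ℂ) ∈ K ∧
    (∀ E : IntermediateField ℚ ℂ, E ≤ K → Module.finrank ℚ (↥E) = 2 →
      E = IntermediateField.adjoin ℚ {((Real.sqrt 17 : ℝ) : ℂ)}) ∧
    (∃ E₁ : IntermediateField ℚ (↥K), Module.finrank ℚ (↥E₁) = 2) ∧
    (∀ E₁ : IntermediateField ℚ (↥K), Module.finrank ℚ (↥E₁) = 2 →
      ¬ ∃ x : ↥K, Algebra.norm (↥E₁) x = (-1 : ↥E₁)) ∧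
    (¬ ∃ x : ↥K, Algebra.norm ℚ x = (-1 : ℚ)) := by
  subst hK
  have hq := quartic_eq_zero_of_sq_eq hα
  have hconj := conj_eq_neg_of_sq_eq hα
  have hfin := adjoin.finiteDimensional (isIntegral_of_quartic hq)
  have hGal := isGalois_adjoin_of_quartic hq
  have hcyc := isCyclic_gal_adjoin_of_quartic hq
  have hmem := sqrt_seventeen_mem_adjoin hα
  refine ⟨hGal, finrank_adjoin_of_quartic hq, hcyc, hmem, fun E hE h2 => ?_,
    ⟨_, finrank_fixedField_quarticAut_sq hq⟩, ?_, ?_⟩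
  · -- Named arguments: on `↥ℚ⟮α⟯` instance search finds `DivisionRing.toRatAlgebra`, while the
    -- lemma is stated with the `IntermediateField` algebra; the two agree only up to unfolding.
    exact eq_of_le_of_finrank_eq_of_isCyclic (hfin := hfin) (hgal := hGal) (hcyc := hcyc)
      hE (adjoin_simple_le_iff.2 hmem) (h2.trans finrank_adjoin_sqrt_seventeen.symm)
  · rintro E₁ h₁ ⟨x, hx⟩
    obtain rfl :=
      eq_of_finrank_eq_of_isCyclic (h₁.trans (finrank_fixedField_quarticAut_sq hq).symm)
    exact norm_fixedField_ne_neg_one_of_conj (algebraMap _ ℂ) (orderOf_quarticAut_sq hq)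
      (quarticAut_sq_apply_eq_conj hq hconj) x hx
  · rintro ⟨x, hx⟩
    exact norm_ne_neg_one_of_pow_half_eq_conj (algebraMap _ ℂ)
      ((orderOf_quarticAut hq).trans (finrank_adjoin_of_quartic hq).symm)
      (finrank_adjoin_of_quartic hq) (quarticAut_sq_apply_eq_conj hq hconj) x hx
end

section
/- Let p be a prime and K/F a cyclic Galois extension of degree p^n with char F ≠ p, and let 1 ≤ i ≤ n − 1. Suppose F contains a primitive p^i-th root of unity and K contains a primitive p^{i+1}-th root of unity ζ. Then ζ lies in the intermediate field K_{n−i} with [K : K_{n−i}] = p^i, and the primitive p-th root of unity ξ_p = ζ^{p^i} satisfies ξ_p ∈ N_{K/K_{n−i}}(K×). In particular m(K/F) ≤ n − i − 1. -/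
/-!
Since `F` contains the `p^i`-th roots of unity, `ζ^p` lies in `F`, so `ω := σ ζ / ζ` is a
`p`-th root of unity; as `i ≥ 1` it lies in `F` too. Hence `σ^k ζ = ω^k ζ`, so `σ^p` fixes `ζ`,
and so does `σ^(p^(n-i))`. The group `⟨σ^(p^(n-i))⟩` has order `p^i`, so the norm of `ζ` down
to its fixed field is `ζ^(p^i)`.
-/

open IntermediateField

section

variable {F K : Type*} [Field F] [Field K] [Algebra F K]

theorem IsPrimitiveRoot.algEquiv_apply_eq_self_of_pow_eq_one {ξ : F} {k : ℕ} [NeZero k]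
    (hξ : IsPrimitiveRoot ξ k) (σ : K ≃ₐ[F] K) {x : K} (hx : x ^ k = 1) : σ x = x := by
  obtain ⟨m, -, rfl⟩ := (hξ.map_of_injective (algebraMap F K).injective).eq_pow_of_pow_eq_one hx
  rw [map_pow, AlgEquiv.commutes]

theorem AlgEquiv.pow_apply_eq_pow_mul_of_apply_eq_mul (σ : K ≃ₐ[F] K) {x ω : K}
    (hx : σ x = ω * x) (hω : σ ω = ω) (k : ℕ) : (σ ^ k) x = ω ^ k * x := by
  induction k with
  | zero => simp
  | succ k ih => rw [pow_succ', AlgEquiv.mul_apply, ih, map_mul, map_pow, hω, hx, pow_succ]; ring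

theorem AlgEquiv.pow_apply_eq_self_of_pow_pow_succ_eq_one {p i : ℕ} (hp : 0 < p) (hi : 1 ≤ i)
    {ξ : F} (hξ : IsPrimitiveRoot ξ (p ^ i)) (σ : K ≃ₐ[F] K) {ζ : K}
    (hζ : ζ ^ p ^ (i + 1) = 1) : (σ ^ p) ζ = ζ := by
  have : NeZero p := ⟨hp.ne'⟩
  have hζ0 : ζ ≠ 0 := by
    rintro rfl; exact zero_ne_one (by rwa [zero_pow (pow_pos hp _).ne'] at hζ)
  have hζp : σ (ζ ^ p) = ζ ^ p :=
    hξ.algEquiv_apply_eq_self_of_pow_eq_one σ (by rw [← pow_mul, ← pow_succ', hζ])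
  set ω := σ ζ * ζ⁻¹
  have hω : ω ^ p = 1 := by
    rw [mul_pow, ← map_pow, hζp, inv_pow, mul_inv_cancel₀ (pow_ne_zero p hζ0)]
  have hξp : IsPrimitiveRoot (ξ ^ p ^ (i - 1)) p :=
    hξ.pow (pow_pos hp i) (by rw [← pow_succ, Nat.sub_add_cancel hi])
  have hσω : σ ω = ω := hξp.algEquiv_apply_eq_self_of_pow_eq_one σ hω
  have hσζ : σ ζ = ω * ζ := by rw [inv_mul_cancel_right₀ hζ0]
  rw [σ.pow_apply_eq_pow_mul_of_apply_eq_mul hσζ hσω, hω, one_mul]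

theorem IntermediateField.mem_fixedField_zpowers_of_apply_eq_self {τ : K ≃ₐ[F] K} {x : K}
    (hx : τ x = x) : x ∈ fixedField (Subgroup.zpowers τ) :=
  (mem_fixedField_iff _ x).mpr fun _ hg =>
    Subgroup.zpowers_le.mpr (show τ ∈ MulAction.stabilizer _ x from hx) hg

theorem IntermediateField.norm_fixedField_eq_pow_card [FiniteDimensional F K]
    (H : Subgroup (K ≃ₐ[F] K)) {x : K} (hx : x ∈ fixedField H) :
    (Algebra.norm (fixedField H) x : K) = x ^ Nat.card H := by
  have hx' : x = algebraMap (fixedField H) K ⟨x, hx⟩ := rfl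
  rw [hx', Algebra.norm_algebraMap, finrank_fixedField_eq_card]
  rfl

theorem orderOf_eq_finrank_of_forall_mem_zpowers [FiniteDimensional F K] [IsGalois F K]
    {σ : K ≃ₐ[F] K} (hσ : ∀ τ : K ≃ₐ[F] K, τ ∈ Subgroup.zpowers σ) :
    orderOf σ = Module.finrank F K := by
  rw [← Nat.card_zpowers, (Subgroup.eq_top_iff' _).mpr hσ, Subgroup.card_top,
    IsGalois.card_aut_eq_finrank]

end

theorem statement17_general (p n i : ℕ) (hp : p.Prime) (hi : 1 ≤ i) (hin : i + 1 ≤ n)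
    (F K : Type) [Field F] [Field K] [Algebra F K] [IsGalois F K]
    (σ : K ≃ₐ[F] K) (hσ : ∀ τ : K ≃ₐ[F] K, τ ∈ Subgroup.zpowers σ)
    (hdeg : Module.finrank F K = p ^ n)
    (ξ : F) (hξ : IsPrimitiveRoot ξ (p ^ i))
    (ζ : K) (hζ : IsPrimitiveRoot ζ (p ^ (i + 1))) :
    ζ ∈ IntermediateField.fixedField (Subgroup.zpowers (σ ^ p ^ (n - i))) ∧
    ∃ x : K,
      (Algebra.norm (IntermediateField.fixedField (Subgroup.zpowers (σ ^ p ^ (n - i)))) x : K)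
        = ζ ^ p ^ i := by
  have : FiniteDimensional F K := .of_finrank_pos (hdeg ▸ pow_pos hp.pos n)
  have hfix : (σ ^ p ^ (n - i)) ζ = ζ := by
    obtain ⟨k, hk⟩ : p ∣ p ^ (n - i) := dvd_pow_self p (by omega)
    have hσp := σ.pow_apply_eq_self_of_pow_pow_succ_eq_one hp.pos hi hξ hζ.pow_eq_one
    rw [hk, pow_mul]
    exact (MulAction.stabilizer (K ≃ₐ[F] K) ζ).pow_mem hσp k
  have hord : orderOf (σ ^ p ^ (n - i)) = p ^ i := by
    have hσord : orderOf σ = p ^ n := (orderOf_eq_finrank_of_forall_mem_zpowers hσ).trans hdeg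
    rw [orderOf_pow_of_dvd (pow_pos hp.pos _).ne' (hσord ▸ pow_dvd_pow p (by omega)), hσord,
      Nat.pow_div (by omega) hp.pos, Nat.sub_sub_self (by omega)]
  have hmem := mem_fixedField_zpowers_of_apply_eq_self hfix
  exact ⟨hmem, ζ, by rw [norm_fixedField_eq_pow_card _ hmem, Nat.card_zpowers, hord]⟩

/-- Let `p` be a prime and `K/F` a cyclic Galois extension of degree
`p^n` with `char F ≠ p`, with `Gal(K/F) = ⟨σ⟩`, and let `1 ≤ i ≤ n − 1`.  Suppose `F`
contains a primitive `p^i`-th root of unity and `K` contains a primitive `p^(i+1)`-th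
root of unity `ζ`.  Then `ζ` lies in the intermediate field `K_{n−i}` (the fixed field
of `⟨σ^(p^(n−i))⟩`, of degree `p^(n−i)` over `F`, so `[K : K_{n−i}] = p^i`), and the
primitive `p`-th root of unity `ξ_p = ζ^(p^i)` satisfies `ξ_p ∈ N_{K/K_{n−i}}(K×)`.
(In particular `m(K/F) ≤ n − i − 1`.) -/
theorem statement17 (p n i : ℕ) (hp : p.Prime) (hi : 1 ≤ i) (hin : i + 1 ≤ n)
    (F K : Type) [Field F] [Field K] [Algebra F K] [IsGalois F K] (hchar : (p : F) ≠ 0)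
    (σ : K ≃ₐ[F] K) (hσ : ∀ τ : K ≃ₐ[F] K, τ ∈ Subgroup.zpowers σ)
    (hdeg : Module.finrank F K = p ^ n)
    (ξ : F) (hξ : IsPrimitiveRoot ξ (p ^ i))
    (ζ : K) (hζ : IsPrimitiveRoot ζ (p ^ (i + 1))) :
    ζ ∈ IntermediateField.fixedField (Subgroup.zpowers (σ ^ p ^ (n - i))) ∧
    ∃ x : K,
      (Algebra.norm (IntermediateField.fixedField (Subgroup.zpowers (σ ^ p ^ (n - i)))) x : K)
        = ζ ^ p ^ i :=
  statement17_general p n i hp hi hin F K σ hσ hdeg ξ hξ ζ hζ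
end
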